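/- Let α_1, …, α_d ∈ (0,1) be irrational with continued fraction convergent denominators (q_n^i)_{n≥0} for each i. If there exists a multi-index (n_1, …, n_d) ∈ ℕ^d with q_{n_1}^1 = q_{n_2}^2 = … = q_{n_d}^d =: q, then for every 1 ≤ p ≤ ∞ (with nearest neighbors computed in the L_p metric on 𝕋^d) one has h_1(q+1) = q. -/

import Mathlib

open scoped BigOperators ENNReal NNReal

/-- Distance from a real number to the nearest integer (the torus norm on ℝ/ℤ). -/
noncomputable def nint (t : ℝ) : ℝ := |t - round t|

/-- The `L_q` distance (for `1 ≤ q ≤ ∞`) between two points of the torus `ℝ^d/ℤ^d`,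
computed on representatives in `ℝ^d`. -/
noncomputable def lqDist (q : ℝ≥0∞) {d : ℕ} (x y : Fin d → ℝ) : ℝ :=
  if q = ⊤ then ⨆ i, nint (x i - y i)
  else (∑ i, nint (x i - y i) ^ q.toReal) ^ (1 / q.toReal)

/-- The `n`-th point of the `d`-dimensional Kronecker sequence `z_n = nα + ℤ^d`
(as a representative in `ℝ^d`). -/
noncomputable def kron {d : ℕ} (α : Fin d → ℝ) (n : ℕ) : Fin d → ℝ :=
  fun c => (n : ℝ) * α c

/-- `L_q`-distance on the torus between the `i`-th and `j`-th points of the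
Kronecker sequence of `α`. -/
noncomputable def kronDist (q : ℝ≥0∞) {d : ℕ} (α : Fin d → ℝ) (i j : ℕ) : ℝ :=
  lqDist q (kron α i) (kron α j)

/-- The index `j ∈ {1, …, N} \ {i}` of the nearest neighbor of `z_i` in
`S_N = {z_1, …, z_N}` w.r.t. the `L_q` torus metric; ties are broken by taking
the largest such index. -/
noncomputable def nnIndex (q : ℝ≥0∞) {d : ℕ} (α : Fin d → ℝ) (N i : ℕ) : ℕ :=
  sSup {j : ℕ | j ∈ Finset.Icc 1 N ∧ j ≠ i ∧
    ∀ m ∈ Finset.Icc 1 N, m ≠ i → kronDist q α i j ≤ kronDist q α i m}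

/-- `h_i(N) = |j - i|` where `z_j` is the nearest neighbor of `z_i` in `S_N`:
the counting-metric distance of `z_i` to its nearest neighbor. -/
noncomputable def hFun (q : ℝ≥0∞) {d : ℕ} (α : Fin d → ℝ) (N i : ℕ) : ℕ :=
  Nat.dist (nnIndex q α N i) i

/-- `g_N(α, ℤ^d, ‖·‖_q)`: the number of distinct nearest neighbor distances
among `d_q(z_i, nn_1(z_i))`, `i = 1, …, N`. -/
noncomputable def gN (q : ℝ≥0∞) {d : ℕ} (α : Fin d → ℝ) (N : ℕ) : ℕ :=
  ((Finset.Icc 1 N).image (fun i => kronDist q α i (nnIndex q α N i))).card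

/-- The Gauss map `x ↦ {1/x}` generating the continued fraction expansion. -/
noncomputable def gaussMap (x : ℝ) : ℝ := Int.fract x⁻¹

/-- The partial quotients of the continued fraction expansion `[0; a_1, a_2, …]`
of an irrational `α ∈ (0,1)`: `a_n = ⌊1 / G^[n-1](α)⌋` (with `a_0 = 0`). -/
noncomputable def cfA (α : ℝ) : ℕ → ℕ
  | 0 => 0
  | n + 1 => (⌊(gaussMap^[n] α)⁻¹⌋).toNat

/-- The denominators of the convergents of the continued fraction of `α`:
`q_0 = 1`, `q_1 = a_1`, `q_n = a_n q_{n-1} + q_{n-2}`. -/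
noncomputable def cfQ (α : ℝ) : ℕ → ℕ
  | 0 => 1
  | 1 => cfA α 1
  | n + 2 => cfA α (n + 2) * cfQ α (n + 1) + cfQ α n

/-! The coordinatewise best approximation property of continued fraction denominators: if
`1 ≤ k ≤ q` and `q = q_n(α)`, then `‖k α‖ ≥ ‖q α‖`. For the common denominator `q` of all
coordinates this says that, seen from `z_1`, the point `z_{q+1}` is at least as close as any
`z_m` with `m ≤ q + 1`, in every `L_p` metric; as it carries the largest index it wins all ties.

The approximation property comes from the unimodularity `p_{n+1} q_n - p_n q_{n+1} = ±1`,
which writes every `k α - m` as an integer combination `a (q_n α - p_n) + b (q_{n+1} α - p_{n+1})`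
in which, for `0 < k < q_{n+1}`, `a ≠ 0` and `a b ≤ 0`; since the errors `q_n α - p_n` alternate
in sign, both terms then have the same sign. -/

lemma nint_le_abs_sub_intCast (t : ℝ) (m : ℤ) : nint t ≤ |t - m| := round_le t m

lemma nint_neg (t : ℝ) : nint (-t) = nint t := by
  refine le_antisymm ?_ ?_
  · refine (nint_le_abs_sub_intCast (-t) (-round t)).trans_eq ?_
    rw [nint, ← abs_neg]; push_cast; ring_nf
  · refine (nint_le_abs_sub_intCast t (-round (-t))).trans_eq ?_
    rw [nint, ← abs_neg]; push_cast; ring_nf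

lemma lqDist_le_lqDist (p : ℝ≥0∞) {d : ℕ} {x y u v : Fin d → ℝ}
    (h : ∀ c, nint (x c - y c) ≤ nint (u c - v c)) : lqDist p x y ≤ lqDist p u v := by
  unfold lqDist
  split_ifs
  · exact ciSup_mono (Set.finite_range _).bddAbove h
  · gcongr with c
    · exact Finset.sum_nonneg fun c _ => Real.rpow_nonneg (abs_nonneg _) _
    · exact abs_nonneg _
    · exact h c

lemma nint_kron_sub_kron {d : ℕ} (α : Fin d → ℝ) {i j : ℕ} (hij : i ≤ j) (c : Fin d) :
    nint (kron α i c - kron α j c) = nint ((j - i : ℕ) * α c) := by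
  rw [← nint_neg, kron, kron, Nat.cast_sub hij]
  ring_nf

lemma kronDist_le_kronDist (p : ℝ≥0∞) {d : ℕ} (α : Fin d → ℝ) {i j m : ℕ} (hj : i ≤ j)
    (hm : i ≤ m) (h : ∀ c, nint ((j - i : ℕ) * α c) ≤ nint ((m - i : ℕ) * α c)) :
    kronDist p α i j ≤ kronDist p α i m :=
  lqDist_le_lqDist p fun c => by
    rw [nint_kron_sub_kron α hj, nint_kron_sub_kron α hm]
    exact h c

lemma nnIndex_eq_self_of_forall_le (p : ℝ≥0∞) {d : ℕ} (α : Fin d → ℝ) {N i : ℕ} (hN : 1 ≤ N)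
    (hi : i ≠ N) (h : ∀ m ∈ Finset.Icc 1 N, m ≠ i → kronDist p α i N ≤ kronDist p α i m) :
    nnIndex p α N i = N :=
  IsGreatest.csSup_eq
    ⟨⟨Finset.mem_Icc.2 ⟨hN, le_rfl⟩, hi.symm, h⟩, fun _ hj => (Finset.mem_Icc.1 hj.1).2⟩

lemma exists_mul_add_mul_eq_of_isUnit_det {p₀ q₀ p₁ q₁ : ℤ} (hdet : IsUnit (p₁ * q₀ - p₀ * q₁))
    (k m : ℤ) : ∃ a b : ℤ, a * q₀ + b * q₁ = k ∧ a * p₀ + b * p₁ = m := by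
  set ε := p₁ * q₀ - p₀ * q₁ with hε
  have hεε : ε * ε = 1 := Int.isUnit_mul_self hdet
  refine ⟨ε * (k * p₁ - m * q₁), ε * (m * q₀ - k * p₀), ?_, ?_⟩
  · linear_combination (ε * k) * hε + k * hεε
  · linear_combination (ε * m) * hε + m * hεε

lemma ne_zero_and_mul_nonpos_of_add_eq {a b q₀ q₁ k : ℤ} (hq₀ : 0 ≤ q₀)
    (hk : 0 < k) (hkq : k < q₁) (hab : a * q₀ + b * q₁ = k) : a ≠ 0 ∧ a * b ≤ 0 := by
  constructor
  · rintro rfl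
    rcases lt_trichotomy b 0 with hb | rfl | hb <;> nlinarith
  · by_contra! hab'
    rcases pos_and_pos_or_neg_and_neg_of_mul_pos hab' with ⟨ha, hb⟩ | ⟨ha, hb⟩ <;> nlinarith

/-- Best approximation by a unimodular pair of lattice points on opposite sides of the line. -/
lemma abs_mul_sub_le_abs_mul_sub {x : ℝ} {p₀ q₀ p₁ q₁ : ℤ} (hq₀ : 0 ≤ q₀)
    (hdet : IsUnit (p₁ * q₀ - p₀ * q₁)) (hsign : (q₀ * x - p₀) * (q₁ * x - p₁) ≤ 0)
    {k : ℤ} (hk : 0 < k) (hkq : k < q₁) (m : ℤ) : |q₀ * x - p₀| ≤ |k * x - m| := by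
  obtain ⟨a, b, hk_eq, hm_eq⟩ := exists_mul_add_mul_eq_of_isUnit_det hdet k m
  obtain ⟨ha, hab⟩ := ne_zero_and_mul_nonpos_of_add_eq hq₀ hk hkq hk_eq
  have hsplit : (k : ℝ) * x - m = a * (q₀ * x - p₀) + b * (q₁ * x - p₁) := by
    rw [← hk_eq, ← hm_eq]; push_cast; ring
  have hsame : 0 ≤ (a * (q₀ * x - p₀)) * (b * (q₁ * x - p₁)) := by
    have hab' : ((a * b : ℤ) : ℝ) ≤ 0 := by exact_mod_cast hab
    rw [show (a * (q₀ * x - p₀)) * (b * (q₁ * x - p₁)) = ((a * b : ℤ) : ℝ) *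
      ((q₀ * x - p₀) * (q₁ * x - p₁)) by push_cast; ring]
    exact mul_nonneg_of_nonpos_of_nonpos hab' hsign
  have ha' : (1 : ℝ) ≤ |(a : ℝ)| := by exact_mod_cast Int.one_le_abs ha
  calc |q₀ * x - p₀| ≤ |(a : ℝ)| * |q₀ * x - p₀| := le_mul_of_one_le_left (abs_nonneg _) ha'
    _ = |a * (q₀ * x - p₀)| := (abs_mul _ _).symm
    _ ≤ |k * x - m| := by
      rw [hsplit, (abs_add_eq_add_abs_iff _ _).2 (mul_nonneg_iff.1 hsame)]
      exact le_add_of_nonneg_right (abs_nonneg _)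

/-- Numerators `p_n` of the convergents. -/
noncomputable def cfP (x : ℝ) : ℕ → ℕ
  | 0 => 0
  | 1 => 1
  | n + 2 => cfA x (n + 2) * cfP x (n + 1) + cfP x n

lemma cfP_succ_mul_cfQ_sub (x : ℝ) (n : ℕ) :
    (cfP x (n + 1) * cfQ x n - cfP x n * cfQ x (n + 1) : ℤ) = (-1) ^ n := by
  induction n with
  | zero => simp [cfP, cfQ]
  | succ n ih =>
    simp only [cfP, cfQ]
    push_cast
    linear_combination -ih

section ContinuedFraction

variable {x : ℝ}

lemma Irrational.iterate_gaussMap (h : Irrational x) (n : ℕ) : Irrational (gaussMap^[n] x) := by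
  induction n with
  | zero => exact h
  | succ n ih =>
    rw [Function.iterate_succ_apply', gaussMap, ← Int.self_sub_floor]
    exact ih.inv.sub_intCast _

lemma iterate_gaussMap_mem_Ioo (hirr : Irrational x) (hx : x ∈ Set.Ioo 0 1) (n : ℕ) :
    gaussMap^[n] x ∈ Set.Ioo 0 1 := by
  cases n with
  | zero => exact hx
  | succ n =>
    have hne := (hirr.iterate_gaussMap (n + 1)).ne_zero
    rw [Function.iterate_succ_apply'] at hne ⊢
    exact ⟨(Int.fract_nonneg _).lt_of_ne' hne, Int.fract_lt_one _⟩

lemma cast_cfA_succ (hirr : Irrational x) (hx : x ∈ Set.Ioo 0 1) (n : ℕ) :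
    (cfA x (n + 1) : ℝ) = ⌊(gaussMap^[n] x)⁻¹⌋ := by
  have hnn := Int.floor_nonneg.2 (inv_pos.2 (iterate_gaussMap_mem_Ioo hirr hx n).1).le
  simp only [cfA]
  exact_mod_cast congrArg (Int.cast : ℤ → ℝ) (Int.toNat_of_nonneg hnn)

lemma one_le_cfA_succ (hirr : Irrational x) (hx : x ∈ Set.Ioo 0 1) (n : ℕ) :
    1 ≤ cfA x (n + 1) := by
  obtain ⟨h0, h1⟩ := iterate_gaussMap_mem_Ioo hirr hx n
  have : (1 : ℝ) ≤ cfA x (n + 1) := by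
    rw [cast_cfA_succ hirr hx n]
    exact_mod_cast Int.le_floor.2 (by exact_mod_cast (one_lt_inv₀ h0).2 h1 |>.le)
  exact_mod_cast this

lemma cfQ_monotone (hirr : Irrational x) (hx : x ∈ Set.Ioo 0 1) : Monotone (cfQ x) := by
  refine monotone_nat_of_le_succ fun n => ?_
  cases n with
  | zero => simpa [cfQ] using one_le_cfA_succ hirr hx 0
  | succ n =>
    have := one_le_cfA_succ hirr hx (n + 1)
    simp only [cfQ]
    nlinarith [Nat.zero_le (cfQ x n)]

lemma cfQ_pos (hirr : Irrational x) (hx : x ∈ Set.Ioo 0 1) (n : ℕ) : 0 < cfQ x n :=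
  lt_of_lt_of_le Nat.one_pos (cfQ_monotone hirr hx (Nat.zero_le n))

lemma mul_gaussMap_add_floor {y : ℝ} (hy : y ≠ 0) : y * (gaussMap y + ⌊y⁻¹⌋) = 1 := by
  rw [gaussMap, Int.fract, sub_add_cancel, mul_inv_cancel₀ hy]

lemma cfQ_succ_mul_sub_cfP_succ (hirr : Irrational x) (hx : x ∈ Set.Ioo 0 1) (n : ℕ) :
    (cfQ x (n + 1) * x - cfP x (n + 1) : ℝ) =
      -gaussMap^[n + 1] x * (cfQ x n * x - cfP x n) := by
  induction n with
  | zero =>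
    have := mul_gaussMap_add_floor hx.1.ne'
    simp only [cfQ, cfP, cast_cfA_succ hirr hx 0]
    push_cast
    simp only [Function.iterate_one, Function.iterate_zero, id_eq]
    linear_combination this
  | succ n ih =>
    have hy := mul_gaussMap_add_floor (iterate_gaussMap_mem_Ioo hirr hx (n + 1)).1.ne'
    simp only [cfQ, cfP]
    push_cast
    rw [cast_cfA_succ hirr hx (n + 1), Function.iterate_succ_apply' _ (n + 1)]
    set y := gaussMap^[n + 1] x
    linear_combination (⌊y⁻¹⌋ + gaussMap y) * ih - (cfQ x n * x - cfP x n : ℝ) * hy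

lemma cfQ_mul_sub_cfP_mul_succ_nonpos (hirr : Irrational x) (hx : x ∈ Set.Ioo 0 1) (n : ℕ) :
    (cfQ x n * x - cfP x n : ℝ) * (cfQ x (n + 1) * x - cfP x (n + 1)) ≤ 0 := by
  have hG := (iterate_gaussMap_mem_Ioo hirr hx (n + 1)).1.le
  rw [cfQ_succ_mul_sub_cfP_succ hirr hx n]
  nlinarith [mul_nonneg hG (sq_nonneg (cfQ x n * x - cfP x n : ℝ))]

lemma nint_cfQ_mul_le (hirr : Irrational x) (hx : x ∈ Set.Ioo 0 1) (n : ℕ) {k : ℕ}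
    (hk : 1 ≤ k) (hkq : k ≤ cfQ x n) : nint (cfQ x n * x) ≤ nint (k * x) := by
  rcases hkq.eq_or_lt with rfl | hlt
  · rfl
  calc nint (cfQ x n * x) ≤ |cfQ x n * x - ((cfP x n : ℤ) : ℝ)| := nint_le_abs_sub_intCast _ _
    _ ≤ |k * x - round (k * x)| := by
      have hdet : IsUnit (cfP x (n + 1) * cfQ x n - cfP x n * cfQ x (n + 1) : ℤ) := by
        rw [cfP_succ_mul_cfQ_sub]
        exact isUnit_neg_one.pow n
      have hkq' : k < cfQ x (n + 1) := hlt.trans_le (cfQ_monotone hirr hx n.le_succ)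
      exact_mod_cast abs_mul_sub_le_abs_mul_sub (Int.natCast_nonneg _) hdet
        (by exact_mod_cast cfQ_mul_sub_cfP_mul_succ_nonpos hirr hx n) (by exact_mod_cast hk)
        (by exact_mod_cast hkq') (round (k * x))

end ContinuedFraction

theorem statement1_general (d : ℕ) (hd : 1 ≤ d) (α : Fin d → ℝ)
    (hmem : ∀ i, α i ∈ Set.Ioo (0 : ℝ) 1) (hirr : ∀ i, Irrational (α i))
    (n : Fin d → ℕ) (Q : ℕ) (hQ : ∀ i, cfQ (α i) (n i) = Q)
    (p : ℝ≥0∞) :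
    hFun p α (Q + 1) 1 = Q := by
  have hQ_pos : 0 < Q := hQ ⟨0, hd⟩ ▸ cfQ_pos (hirr _) (hmem _) _
  have hmin : ∀ m ∈ Finset.Icc 1 (Q + 1), m ≠ 1 →
      kronDist p α 1 (Q + 1) ≤ kronDist p α 1 m := by
    intro m hm hm1
    rw [Finset.mem_Icc] at hm
    refine kronDist_le_kronDist p α (by omega) hm.1 fun c => ?_
    have := nint_cfQ_mul_le (hirr c) (hmem c) (n c) (k := m - 1) (by omega) (by rw [hQ c]; omega)
    simpa [hQ c] using this
  rw [hFun, nnIndex_eq_self_of_forall_le p α (by omega) (by omega) hmin, Nat.dist_comm,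
    Nat.dist_eq_sub_of_le (by omega), Nat.add_sub_cancel]

/-- If `α_1, …, α_d ∈ (0,1)` are irrational and there is a multi-index
`(n_1, …, n_d)` with `q_{n_1}^1 = … = q_{n_d}^d = Q`, then for every `1 ≤ p ≤ ∞`
one has `h_1(Q+1) = Q`. -/
theorem statement1 (d : ℕ) (hd : 1 ≤ d) (α : Fin d → ℝ)
    (hmem : ∀ i, α i ∈ Set.Ioo (0 : ℝ) 1) (hirr : ∀ i, Irrational (α i))
    (n : Fin d → ℕ) (Q : ℕ) (hQ : ∀ i, cfQ (α i) (n i) = Q)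
    (p : ℝ≥0∞) (hp : 1 ≤ p) :
    hFun p α (Q + 1) 1 = Q :=
  statement1_general d hd α hmem hirr n Q hQ p
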